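/- Let G=(V,E) be a graph whose edge set E is independent, and let G₁=(V₁,E₁) and G₂=(V₂,E₂) be subgraphs of G such that each Eᵢ is independent with |Eᵢ| = 2|Vᵢ| − 3 (Vᵢ the support of Eᵢ). If |V₁ ∩ V₂| ≥ 2, then |E₁ ∩ E₂| ≥ 1. -/
import Mathlib

/-- The support of an edge set: the set of all endpoints of its edges. -/
def edgeSupport {V : Type*} [DecidableEq V] (E : Finset (Sym2 V)) : Finset V :=
  E.sup (fun e => Sym2.lift ⟨fun a b => ({a, b} : Finset V), fun a b => Finset.pair_comm a b⟩ e)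

/-- An edge set `E` is independent if every nonempty subset `E' ⊆ E` satisfies
`|E'| ≤ 2|V'| - 3`, where `V'` is the support of `E'`. -/
def EdgeIndep {V : Type*} [DecidableEq V] (E : Finset (Sym2 V)) : Prop :=
  ∀ E' ⊆ E, E'.Nonempty → (E'.card : ℤ) ≤ 2 * (edgeSupport E').card - 3

lemma edgeSupport_union {V : Type*} [DecidableEq V] (E₁ E₂ : Finset (Sym2 V)) :
    edgeSupport (E₁ ∪ E₂) = edgeSupport E₁ ∪ edgeSupport E₂ := by
  simp [edgeSupport, Finset.sup_union]

/-- Let `G = (V, E)` be a graph whose edge set is independent, and let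
`G₁ = (V₁, E₁)`, `G₂ = (V₂, E₂)` be minimally rigid subgraphs of `G` (each `Eᵢ` independent
with `|Eᵢ| = 2|Vᵢ| - 3`). If `|V₁ ∩ V₂| ≥ 2` then `|E₁ ∩ E₂| ≥ 1`. -/
theorem minimally_rigid_subgraphs_overlap_in_edge {V : Type*} [DecidableEq V]
    (E E₁ E₂ : Finset (Sym2 V)) (hE : EdgeIndep E)
    (hsub₁ : E₁ ⊆ E) (hsub₂ : E₂ ⊆ E)
    (hind₁ : EdgeIndep E₁) (hind₂ : EdgeIndep E₂)
    (hcard₁ : (E₁.card : ℤ) = 2 * (edgeSupport E₁).card - 3)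
    (hcard₂ : (E₂.card : ℤ) = 2 * (edgeSupport E₂).card - 3)
    (hint : 2 ≤ (edgeSupport E₁ ∩ edgeSupport E₂).card) :
    1 ≤ (E₁ ∩ E₂).card := by
  by_contra h
  push_neg at h
  interval_cases hc : (E₁ ∩ E₂).card
  have hdisj : Disjoint E₁ E₂ := Finset.disjoint_iff_inter_eq_empty.2 (Finset.card_eq_zero.1 hc)
  have hne₁ : E₁.Nonempty := by
    rcases E₁.eq_empty_or_nonempty with h1 | h1
    · simp [h1, edgeSupport] at hcard₁
    · exact h1
  have hne : (E₁ ∪ E₂).Nonempty := hne₁.mono Finset.subset_union_left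
  have hbound := hE (E₁ ∪ E₂) (Finset.union_subset hsub₁ hsub₂) hne
  rw [edgeSupport_union] at hbound
  have hcardU : (E₁ ∪ E₂).card = E₁.card + E₂.card := Finset.card_union_of_disjoint hdisj
  have hVU := Finset.card_union_add_card_inter (edgeSupport E₁) (edgeSupport E₂)
  rw [hcardU] at hbound
  push_cast at hbound
  omega
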